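/- arXiv:1402.4493 — 2 statements merged into one kernel-verified Lean document; each statement's English description precedes it below -/
import Mathlib

section
/- Any solution T of the octahedron recurrence whose initial data on the planes k=0 and k=1 satisfies the m-toroidal conditions t(i+m,j-m) = t(i,j) and t(i+2,j+2) = t(i,j) satisfies the same periodicities for all times: T(i+m,j-m,k) = T(i,j,k) and T(i+2,j+2,k) = T(i,j,k) for all i,j ∈ ℤ and k ≥ 0. -/
/-- Any solution of the octahedron recurrence whose initial data (on the planes `k = 0, 1`)
satisfies the `m`-toroidal conditions satisfies the same periodicities for all times. -/
theorem m_toroidal_periodicity_propagates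
    (m : ℕ) (hm : 1 ≤ m)
    (T : ℤ → ℤ → ℕ → ℝ)
    (hne : ∀ (i j : ℤ) (k : ℕ), T i j k ≠ 0)
    (hrec : ∀ (i j : ℤ) (k : ℕ), 1 ≤ k →
      T i j (k + 1) * T i j (k - 1) =
        T (i + 1) j k * T (i - 1) j k + T i (j + 1) k * T i (j - 1) k)
    (hper1 : ∀ (i j : ℤ) (k : ℕ), k ≤ 1 → T (i + m) (j - m) k = T i j k)
    (hper2 : ∀ (i j : ℤ) (k : ℕ), k ≤ 1 → T (i + 2) (j + 2) k = T i j k) :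
    ∀ (i j : ℤ) (k : ℕ),
      T (i + m) (j - m) k = T i j k ∧ T (i + 2) (j + 2) k = T i j k := by
  suffices h : ∀ (k : ℕ) (i j : ℤ),
      T (i + m) (j - m) k = T i j k ∧ T (i + 2) (j + 2) k = T i j k by
    exact fun i j k => h k i j
  intro k
  induction k using Nat.strong_induction_on with
  | _ k ih =>
    intro i j
    match k with
    | 0 => exact ⟨hper1 i j 0 (by norm_num), hper2 i j 0 (by norm_num)⟩
    | 1 => exact ⟨hper1 i j 1 le_rfl, hper2 i j 1 le_rfl⟩
    | (n+2) =>
      have hn : 1 ≤ n + 1 := Nat.le_add_left 1 n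
      have h1 := hrec (i + m) (j - m) (n+1) hn
      have h1' := hrec i j (n+1) hn
      have h2 := hrec (i + 2) (j + 2) (n+1) hn
      have ihn := ih (n+1) (Nat.lt_succ_self _)
      have ihn' := ih n (by omega)
      constructor
      · have key : T (i + m) (j - m) (n + 1 + 1) * T (i + m) (j - m) n
            = T i j (n + 1 + 1) * T i j n := by
          rw [show (n + 1 - 1 : ℕ) = n from rfl] at h1 h1'
          rw [h1, h1']
          have e1 : (i + m + 1 : ℤ) = (i + 1) + m := by ring
          have e2 : (i + m - 1 : ℤ) = (i - 1) + m := by ring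
          have e3 : (j - m + 1 : ℤ) = (j + 1) - m := by ring
          have e4 : (j - m - 1 : ℤ) = (j - 1) - m := by ring
          rw [e1, e2, e3, e4,
            (ihn (i+1) j).1, (ihn (i-1) j).1, (ihn i (j+1)).1, (ihn i (j-1)).1]
        have hT : T (i + m) (j - m) n = T i j n := (ihn' i j).1
        rw [hT] at key
        exact mul_right_cancel₀ (hne i j n) key
      · have key : T (i + 2) (j + 2) (n + 1 + 1) * T (i + 2) (j + 2) n
            = T i j (n + 1 + 1) * T i j n := by
          rw [show (n + 1 - 1 : ℕ) = n from rfl] at h2 h1'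
          rw [h2, h1']
          have e1 : (i + 2 + 1 : ℤ) = (i + 1) + 2 := by ring
          have e2 : (i + 2 - 1 : ℤ) = (i - 1) + 2 := by ring
          have e3 : (j + 2 + 1 : ℤ) = (j + 1) + 2 := by ring
          have e4 : (j + 2 - 1 : ℤ) = (j - 1) + 2 := by ring
          rw [e1, e2, e3, e4,
            (ihn (i+1) j).2, (ihn (i-1) j).2, (ihn i (j+1)).2, (ihn i (j-1)).2]
        have hT : T (i + 2) (j + 2) n = T i j n := (ihn' i j).2
        rw [hT] at key
        exact mul_right_cancel₀ (hne i j n) key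
end

section
/- For the 2×2 periodic solution T of the octahedron equation with initial data a,b,c,d (T given explicitly by the factorized formula of the 2×2 case), the ratio L(i,j,k) = T(i+1,j,k)·T(i-1,j,k)/(T(i,j,k+1)·T(i,j,k-1)) satisfies the additional periodicity L(i+1,j+1,k+2) = L(i,j,k), together with L(i+2,j,k) = L(i,j,k) and L(i,j+2,k) = L(i,j,k). -/
/-- For the explicit `2×2`-periodic solution of the octahedron equation, the ratio
`L(i,j,k) = T(i+1,j,k)·T(i-1,j,k)/(T(i,j,k+1)·T(i,j,k-1))` satisfies the periodicities
`L(i+1,j+1,k+2) = L(i,j,k)`, `L(i+2,j,k) = L(i,j,k)` and `L(i,j+2,k) = L(i,j,k)`. -/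
theorem two_by_two_L_periodicity
    (a b c d : ℝ) (ha : 0 < a) (hb : 0 < b) (hc : 0 < c) (hd : 0 < d)
    (t : ℤ → ℤ → ℝ)
    (ht : ∀ i j : ℤ, t i j =
      if i % 2 = 0 then (if j % 2 = 0 then a else c)
      else (if j % 2 = 0 then d else b))
    (T : ℤ → ℤ → ℕ → ℝ)
    (hT : ∀ (i j : ℤ) (k : ℕ), T i j k =
      ((a ^ 2 + b ^ 2) / (c * d)) ^ (k / 2 * ((k + 1) / 2)) *
      ((c ^ 2 + d ^ 2) / (a * b)) ^ ((k - 1) / 2 * (k / 2)) *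
      (if k % 4 = 0 ∨ k % 4 = 1 then t i j else t (i + 1) (j + 1)))
    (L : ℤ → ℤ → ℕ → ℝ)
    (hL : ∀ (i j : ℤ) (k : ℕ), L i j k =
      T (i + 1) j k * T (i - 1) j k / (T i j (k + 1) * T i j (k - 1))) :
    ∀ (i j : ℤ) (k : ℕ), 1 ≤ k →
      L (i + 1) (j + 1) (k + 2) = L i j k ∧
      L (i + 2) j k = L i j k ∧
      L i (j + 2) k = L i j k := by
  set X : ℝ := (a ^ 2 + b ^ 2) / (c * d) with hXdef
  set Y : ℝ := (c ^ 2 + d ^ 2) / (a * b) with hYdef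
  have hX : 0 < X := by rw [hXdef]; positivity
  have hY : 0 < Y := by rw [hYdef]; positivity
  -- periodicity of t
  have hti : ∀ i j : ℤ, t (i + 2) j = t i j := by
    intro i j
    rw [ht (i + 2) j, ht i j]
    have h2 : (i + 2) % 2 = i % 2 := by omega
    rw [h2]
  have htj : ∀ i j : ℤ, t i (j + 2) = t i j := by
    intro i j
    rw [ht i (j + 2), ht i j]
    have h2 : (j + 2) % 2 = j % 2 := by omega
    rw [h2]
  -- exponent identities
  have he1 : ∀ k : ℕ, (k + 2) / 2 * ((k + 2 + 1) / 2) = k / 2 * ((k + 1) / 2) + (k + 1) := by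
    intro k
    rcases Nat.even_or_odd k with ⟨m, rfl⟩ | ⟨m, rfl⟩
    · have h1 : (m + m + 2) / 2 = m + 1 := by omega
      have h2 : (m + m + 2 + 1) / 2 = m + 1 := by omega
      have h3 : (m + m) / 2 = m := by omega
      have h4 : (m + m + 1) / 2 = m := by omega
      rw [h1, h2, h3, h4]; ring
    · have h1 : (2 * m + 1 + 2) / 2 = m + 1 := by omega
      have h2 : (2 * m + 1 + 2 + 1) / 2 = m + 2 := by omega
      have h3 : (2 * m + 1) / 2 = m := by omega
      have h4 : (2 * m + 1 + 1) / 2 = m + 1 := by omega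
      rw [h1, h2, h3, h4]; ring
  have he2 : ∀ k : ℕ, (k + 2 - 1) / 2 * ((k + 2) / 2) = (k - 1) / 2 * (k / 2) + k := by
    intro k
    rcases Nat.even_or_odd k with ⟨m, rfl⟩ | ⟨m, rfl⟩
    · have h1 : (m + m + 2 - 1) / 2 = m := by omega
      have h2 : (m + m + 2) / 2 = m + 1 := by omega
      have h3 : (m + m - 1) / 2 = m - 1 := by omega
      have h4 : (m + m) / 2 = m := by omega
      rw [h1, h2, h3, h4]
      cases m with
      | zero => simp
      | succ m' => simp only [Nat.succ_sub_one]; ring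
    · have h1 : (2 * m + 1 + 2 - 1) / 2 = m + 1 := by omega
      have h2 : (2 * m + 1 + 2) / 2 = m + 1 := by omega
      have h3 : (2 * m + 1 - 1) / 2 = m := by omega
      have h4 : (2 * m + 1) / 2 = m := by omega
      rw [h1, h2, h3, h4]; ring
  -- the key shift identity
  have hS : ∀ (i j : ℤ) (k : ℕ),
      T (i + 1) (j + 1) (k + 2) = X ^ (k + 1) * Y ^ k * T i j k := by
    intro i j k
    rw [hT (i + 1) (j + 1) (k + 2), hT i j k, he1 k, he2 k, pow_add X, pow_add Y]
    have htt : t (i + 1 + 1) (j + 1 + 1) = t i j := by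
      have h1 : i + 1 + 1 = i + 2 := by ring
      have h2 : j + 1 + 1 = j + 2 := by ring
      rw [h1, h2, hti, htj]
    by_cases hc4 : k % 4 = 0 ∨ k % 4 = 1
    · rw [if_neg (by omega : ¬((k + 2) % 4 = 0 ∨ (k + 2) % 4 = 1)), if_pos hc4, htt]; ring
    · rw [if_pos (by omega : (k + 2) % 4 = 0 ∨ (k + 2) % 4 = 1), if_neg hc4]; ring
  -- periodicity of T in i and j
  have hTi : ∀ (i j : ℤ) (k : ℕ), T (i + 2) j k = T i j k := by
    intro i j k
    rw [hT (i + 2) j k, hT i j k]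
    congr 1
    split_ifs with h
    · exact hti i j
    · have h1 : i + 2 + 1 = i + 1 + 2 := by ring
      rw [h1, hti]
  have hTj : ∀ (i j : ℤ) (k : ℕ), T i (j + 2) k = T i j k := by
    intro i j k
    rw [hT i (j + 2) k, hT i j k]
    congr 1
    split_ifs with h
    · exact htj i j
    · have h1 : j + 2 + 1 = j + 1 + 2 := by ring
      rw [h1, htj]
  have key : ∀ q1 q2 q3 A B C D : ℝ, q1 ^ 2 = q2 * q3 → q2 * q3 ≠ 0 →
      q1 * A * (q1 * B) / (q2 * C * (q3 * D)) = A * B / (C * D) := by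
    intro q1 q2 q3 A B C D h hne
    have h1 : q1 * A * (q1 * B) = q2 * q3 * (A * B) := by rw [← h]; ring
    have h2 : q2 * C * (q3 * D) = q2 * q3 * (C * D) := by ring
    rw [h1, h2, mul_div_mul_left _ _ hne]
  intro i j k hk
  obtain ⟨n, rfl⟩ : ∃ n, k = n + 1 := ⟨k - 1, by omega⟩
  refine ⟨?_, ?_, ?_⟩
  · -- L (i+1) (j+1) (k+2) = L i j k
    rw [hL (i + 1) (j + 1) (n + 1 + 2), hL i j (n + 1)]
    rw [show i + 1 - 1 = i - 1 + 1 by ring]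
    rw [show n + 1 + 2 + 1 = n + 2 + 2 by omega]
    rw [show n + 1 + 2 - 1 = n + 2 by omega]
    rw [hS (i + 1) j (n + 1), hS (i - 1) j (n + 1), hS i j (n + 2), hS i j n]
    rw [show n + 1 - 1 = n by omega]
    rw [show n + 1 + 1 = n + 2 by omega]
    refine key _ _ _ _ _ _ _ (by ring) ?_
    exact (mul_pos (mul_pos (pow_pos hX _) (pow_pos hY _))
      (mul_pos (pow_pos hX _) (pow_pos hY _))).ne'
  · rw [hL (i + 2) j (n + 1), hL i j (n + 1)]
    rw [show i + 2 + 1 = i + 1 + 2 by ring, show i + 2 - 1 = i - 1 + 2 by ring]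
    simp only [hTi]
  · rw [hL i (j + 2) (n + 1), hL i j (n + 1)]
    simp only [hTj]
end
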